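/- arXiv:1309.4142 — 2 statements merged into one kernel-verified Lean document; each statement's English description precedes it below -/
import Mathlib

section
/- Let M be a factor (a von Neumann algebra with trivial center) and let α be an automorphism of M. Suppose n ≥ 1 and u ∈ M is a unitary with α^n = Ad(u). Then there exists λ ∈ ℂ with λ^n = 1 and α(u) = λ u. -/
/-- Let `M` be a factor (trivial center) and `α` an automorphism of `M`.  If `n ≥ 1`
and `u` is a unitary with `α^n = Ad(u)`, then there is `λ ∈ ℂ` with `λ^n = 1` and
`α(u) = λ u` (the obstruction to lifting). -/
theorem obstruction_to_lifting_exists {M : Type*} [CStarAlgebra M]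
    (hfactor : ∀ z : M, (∀ x : M, z * x = x * z) → ∃ c : ℂ, z = c • (1 : M))
    (α : M ≃⋆ₐ[ℂ] M) (n : ℕ) (hn : 1 ≤ n)
    (u : M) (hu : u ∈ unitary M)
    (hα : ∀ x : M, (⇑α)^[n] x = u * x * star u) :
    ∃ lam : ℂ, lam ^ n = 1 ∧ α u = lam • u := by
  by_cases hs : Subsingleton M
  · exact ⟨1, one_pow n, Subsingleton.elim _ _⟩
  have : Nontrivial M := not_subsingleton_iff_nontrivial.mp hs
  obtain ⟨hu1, hu2⟩ := Unitary.mem_iff.mp hu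
  -- α commutes with Ad(u) suitably: α(u) y α(u)* = u y u* for all y
  have key : ∀ y : M, α u * y * star (α u) = u * y * star u := by
    intro y
    have h1 : (⇑α)^[n] (α (α.symm y)) = α ((⇑α)^[n] (α.symm y)) := by
      rw [← Function.iterate_succ_apply, Function.iterate_succ_apply']
    rw [α.apply_symm_apply] at h1
    rw [hα] at h1
    rw [hα] at h1
    rw [map_mul, map_mul, map_star, α.apply_symm_apply] at h1
    exact h1.symm
  -- z := α(u)* u is central
  have e1 : star (α u) * α u = 1 := by rw [← map_star, ← map_mul, hu1, map_one]
  have e2 : α u * star (α u) = 1 := by rw [← map_star, ← map_mul, hu2, map_one]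
  have hu1' : ∀ x : M, star u * (u * x) = x := by
    intro x; rw [← mul_assoc, hu1, one_mul]
  have hu2' : ∀ x : M, u * (star u * x) = x := by
    intro x; rw [← mul_assoc, hu2, one_mul]
  have e1' : ∀ x : M, star (α u) * (α u * x) = x := by
    intro x; rw [← mul_assoc, e1, one_mul]
  have e2' : ∀ x : M, α u * (star (α u) * x) = x := by
    intro x; rw [← mul_assoc, e2, one_mul]
  have hzc : ∀ y : M, (star (α u) * u) * y = y * (star (α u) * u) := by
    intro y
    have h := congrArg (fun w => star (α u) * w * u) (key y)
    simpa [mul_assoc, hu1, hu2, e1, e2, hu1', hu2', e1', e2'] using h.symm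
  obtain ⟨c, hc⟩ := hfactor _ hzc
  -- star of z
  have hstz : star u * α u = (starRingEnd ℂ c) • 1 := by
    have := congrArg star hc
    rw [star_mul, star_star, star_smul, star_one] at this
    exact this
  -- c * conj c = 1
  have hcu : c * starRingEnd ℂ c = 1 := by
    have h1 : (star (α u) * u) * (star u * α u) = 1 := by
      calc (star (α u) * u) * (star u * α u)
          = star (α u) * (u * star u) * α u := by noncomm_ring
        _ = 1 := by rw [hu2, mul_one, e1]
    rw [hc, hstz, smul_mul_smul_comm, one_mul] at h1
    have : algebraMap ℂ M (c * starRingEnd ℂ c) = algebraMap ℂ M 1 := by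
      rw [map_one, Algebra.algebraMap_eq_smul_one, h1]
    exact (algebraMap ℂ M).injective this
  -- α u = conj c • u
  have hmain : α u = (starRingEnd ℂ c) • u := by
    have h1 : u = c • α u := by
      calc u = α u * (star (α u) * u) := by rw [← mul_assoc, e2, one_mul]
        _ = α u * (c • 1) := by rw [hc]
        _ = c • α u := by rw [mul_smul_comm, mul_one]
    calc α u = (c * starRingEnd ℂ c) • α u := by rw [hcu, one_smul]
      _ = (starRingEnd ℂ c) • (c • α u) := by rw [mul_comm, mul_smul]
      _ = (starRingEnd ℂ c) • u := congrArg _ h1.symm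
  refine ⟨starRingEnd ℂ c, ?_, hmain⟩
  -- iterate
  have hiter : ∀ k : ℕ, (⇑α)^[k] u = ((starRingEnd ℂ c) ^ k) • u := by
    intro k
    induction k with
    | zero => simp
    | succ k ih =>
      rw [Function.iterate_succ_apply', ih, map_smul, hmain, smul_smul, pow_succ,
        mul_comm]
  have hfix : (⇑α)^[n] u = u := by
    rw [hα, mul_assoc, hu2, mul_one]
  rw [hiter n] at hfix
  have hune : u ≠ 0 := by
    intro h0
    apply one_ne_zero (α := M)
    rw [← hu1, h0, mul_zero]
  have hz : ((starRingEnd ℂ c) ^ n - 1) • u = 0 := by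
    rw [sub_smul, one_smul, hfix, sub_self]
  rcases smul_eq_zero.mp hz with h | h
  · exact sub_eq_zero.mp h
  · exact absurd h hune
end

section
/- Let A and B be unital C*-algebras, and suppose B has a unique tracial state τ. Then for any tracial state ρ on the minimal tensor product A ⊗ B, and any positive element a ∈ A, the functional b ↦ ρ(a ⊗ b) on B equals ρ(a ⊗ 1)·τ. Consequently ρ = σ ⊗ τ where σ(a) = ρ(a ⊗ 1). -/
/-- A tracial state on a unital C*-algebra: a positive linear functional of norm one
(`φ 1 = 1`, `φ (x* x) ≥ 0`) satisfying the trace identity `φ(xy) = φ(yx)`. -/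
def IsTracialState {A : Type*} [CStarAlgebra A] (φ : A →ₗ[ℂ] ℂ) : Prop :=
  φ 1 = 1 ∧ (∀ x : A, 0 ≤ (φ (star x * x)).re ∧ (φ (star x * x)).im = 0) ∧
    ∀ x y : A, φ (x * y) = φ (y * x)

-- Cauchy-Schwarz degenerate case for a positive linear functional
lemma cs_zero {C : Type*} [Ring C] [StarRing C] [Algebra ℂ C] [StarModule ℂ C]
    (φ : C →ₗ[ℂ] ℂ)
    (hpos : ∀ x : C, 0 ≤ (φ (star x * x)).re ∧ (φ (star x * x)).im = 0)
    (x y : C) (hx : φ (star x * x) = 0) : φ (star x * y) = 0 := by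
  set u := φ (star x * y) with hu
  set v := φ (star y * x) with hv
  set w := φ (star y * y) with hw
  have expand : ∀ t : ℂ, φ (star (x + t • y) * (x + t • y)) =
      t * u + (starRingEnd ℂ) t * v + (t * (starRingEnd ℂ) t) * w := by
    intro t
    have e : star (x + t • y) * (x + t • y) =
        star x * x + t • (star x * y) + (starRingEnd ℂ) t • (star y * x)
          + (t * (starRingEnd ℂ) t) • (star y * y) := by
      simp only [star_add, star_smul, add_mul, mul_add, smul_mul_assoc,
        mul_smul_comm, smul_smul, starRingEnd_apply]
      module
    rw [e]
    simp only [map_add, map_smul, hx, zero_add, smul_eq_mul]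
    try ring
  have key : ∀ t : ℂ, 0 ≤ (t * u + (starRingEnd ℂ) t * v + (t * (starRingEnd ℂ) t) * w).re ∧
      (t * u + (starRingEnd ℂ) t * v + (t * (starRingEnd ℂ) t) * w).im = 0 := by
    intro t
    have h := hpos (x + t • y)
    rwa [expand t] at h
  have hwim : w.im = 0 := (hpos y).2
  have h1 := (key 1).2
  have h2 := (key Complex.I).2
  simp [Complex.add_im, Complex.mul_im, Complex.I_re, Complex.I_im, hwim] at h1 h2
  -- derive v = conj u
  have hvconj : v = (starRingEnd ℂ) u := by
    apply Complex.ext <;> simp [Complex.conj_re, Complex.conj_im] <;> nlinarith [h1, h2]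
  have h3 : ∀ ε : ℝ, 0 < ε →
      0 ≤ -2 * ε * Complex.normSq u + ε ^ 2 * Complex.normSq u * w.re := by
    intro ε hε
    have h := (key (-(ε : ℂ) * (starRingEnd ℂ) u)).1
    rw [hvconj] at h
    have : ((-(ε : ℂ) * (starRingEnd ℂ) u) * u + (starRingEnd ℂ) (-(ε : ℂ) * (starRingEnd ℂ) u) * (starRingEnd ℂ) u + ((-(ε : ℂ) * (starRingEnd ℂ) u) * (starRingEnd ℂ) (-(ε : ℂ) * (starRingEnd ℂ) u)) * w).re
        = -2 * ε * Complex.normSq u + ε ^ 2 * Complex.normSq u * w.re := by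
      simp [map_mul, Complex.normSq_apply, Complex.mul_re, Complex.mul_im, Complex.conj_re, Complex.conj_im]
      ring
    linarith [this ▸ h]
  by_contra hu0
  have hnu : 0 < Complex.normSq u := Complex.normSq_pos.mpr hu0
  have hwre : 0 ≤ w.re := (hpos y).1
  have hw1 : 0 < w.re + 1 := by linarith
  set ε := 1 / (w.re + 1) with hε
  have hεpos : 0 < ε := by positivity
  have hεw : ε * w.re < 1 := by
    rw [hε, one_div, inv_mul_eq_div]
    exact (div_lt_one hw1).mpr (by linarith)
  have hineq := h3 ε hεpos
  have hlt : ε * Complex.normSq u * (ε * w.re - 2) < 0 :=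
    mul_neg_of_pos_of_neg (mul_pos hεpos hnu) (by linarith)
  nlinarith [hineq, hlt]


lemma key_lemma {A B C : Type*}
    [CStarAlgebra A] [CStarAlgebra B] [CStarAlgebra C]
    (f : A →⋆ₐ[ℂ] C) (g : B →⋆ₐ[ℂ] C)
    (hcomm : ∀ (a : A) (b : B), f a * g b = g b * f a)
    (τ : B →ₗ[ℂ] ℂ)
    (huniq : ∀ τ' : B →ₗ[ℂ] ℂ, IsTracialState τ' → τ' = τ)
    (ρ : C →ₗ[ℂ] ℂ) (hρ : IsTracialState ρ)
    (c : A) (b : B) :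
    ρ (f (star c * c) * g b) = ρ (f (star c * c)) * τ b := by
  obtain ⟨hρ1, hρpos, hρtr⟩ := hρ
  have hfa : f (star c * c) = star (f c) * f c := by rw [map_mul, map_star]
  have hrpos : 0 ≤ (ρ (f (star c * c))).re ∧ (ρ (f (star c * c))).im = 0 := by
    rw [hfa]; exact hρpos (f c)
  by_cases hr0 : ρ (f (star c * c)) = 0
  · have h0 : ρ (star (f c) * (f c * g b)) = 0 := by
      apply cs_zero ρ hρpos
      rw [← hfa]; exact hr0
    rw [← mul_assoc, ← hfa] at h0
    rw [h0, hr0, zero_mul]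
  · -- the value is a positive real
    have hrre : ρ (f (star c * c)) = ((ρ (f (star c * c))).re : ℂ) :=
      Complex.ext rfl (by rw [Complex.ofReal_im]; exact hrpos.2)
    have hrrepos : 0 < (ρ (f (star c * c))).re := by
      rcases lt_or_eq_of_le hrpos.1 with h | h
      · exact h
      · exact absurd (by rw [hrre, ← h]; simp) hr0
    -- the candidate tracial state on B
    set L : B →ₗ[ℂ] ℂ :=
      { toFun := fun b' => (ρ (f (star c * c)))⁻¹ * ρ (f (star c * c) * g b')
        map_add' := by intro x y; simp [map_add, mul_add]
        map_smul' := by intro s x; simp [map_smul]; ring } with hL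
    have hL1 : L 1 = 1 := by
      simp only [hL, LinearMap.coe_mk, AddHom.coe_mk]
      rw [map_one, mul_one, inv_mul_cancel₀ hr0]
    have hLpos : ∀ b' : B, 0 ≤ (L (star b' * b')).re ∧ (L (star b' * b')).im = 0 := by
      intro b'
      have hy := hρpos (g b' * f (star c))
      have e2 : ρ (star (g b' * f (star c)) * (g b' * f (star c))) =
          ρ (f (star c * c) * g (star b' * b')) := by
        calc ρ (star (g b' * f (star c)) * (g b' * f (star c)))
            = ρ ((f c * g (star b')) * (g b' * f (star c))) := by
              rw [star_mul, map_star, star_star, map_star]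
          _ = ρ (f c * (g (star b') * (g b' * f (star c)))) := by rw [mul_assoc]
          _ = ρ ((g (star b') * (g b' * f (star c))) * f c) := hρtr _ _
          _ = ρ (g (star b') * (g b' * (f (star c) * f c))) := by
              rw [mul_assoc, mul_assoc]
          _ = ρ (g (star b') * (g b' * f (star c * c))) := by rw [← map_mul]
          _ = ρ (g (star b') * (f (star c * c) * g b')) := by
              rw [← hcomm (star c * c) b']
          _ = ρ ((g (star b') * f (star c * c)) * g b') := by rw [mul_assoc]
          _ = ρ ((f (star c * c) * g (star b')) * g b') := by
              rw [← hcomm (star c * c) (star b')]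
          _ = ρ (f (star c * c) * (g (star b') * g b')) := by rw [mul_assoc]
          _ = ρ (f (star c * c) * g (star b' * b')) := by rw [← map_mul]
      rw [e2] at hy
      simp only [hL, LinearMap.coe_mk, AddHom.coe_mk]
      rw [hrre, ← Complex.ofReal_inv]
      constructor
      · rw [Complex.re_ofReal_mul]
        exact mul_nonneg (by positivity) hy.1
      · rw [Complex.im_ofReal_mul, hy.2, mul_zero]
    have hLtr : ∀ x y : B, L (x * y) = L (y * x) := by
      intro x y
      simp only [hL, LinearMap.coe_mk, AddHom.coe_mk]
      congr 1
      rw [map_mul g, map_mul g]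
      calc ρ (f (star c * c) * (g x * g y))
          = ρ ((f (star c * c) * g x) * g y) := by rw [mul_assoc]
        _ = ρ (g y * (f (star c * c) * g x)) := hρtr _ _
        _ = ρ ((g y * f (star c * c)) * g x) := by rw [mul_assoc]
        _ = ρ ((f (star c * c) * g y) * g x) := by rw [hcomm (star c * c) y]
        _ = ρ (f (star c * c) * (g y * g x)) := by rw [mul_assoc]
    have hall := huniq L ⟨hL1, hLpos, hLtr⟩
    have hLb : L b = τ b := by rw [hall]
    simp only [hL, LinearMap.coe_mk, AddHom.coe_mk] at hLb
    rw [← hLb, ← mul_assoc, mul_inv_cancel₀ hr0, one_mul]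

-- polarization: every element is a ℂ-combination of star-squares
lemma polarize {A : Type*} [Ring A] [StarRing A] [Algebra ℂ A] [StarModule ℂ A] (a : A) :
    (4 : ℂ) • a =
      star (1 + a) * (1 + a)
        - Complex.I • (star (1 + Complex.I • a) * (1 + Complex.I • a))
        - star (1 - a) * (1 - a)
        + Complex.I • (star (1 - Complex.I • a) * (1 - Complex.I • a)) := by
  simp only [star_add, star_sub, star_one, star_smul, Complex.star_def, Complex.conj_I,
    add_mul, mul_add, sub_mul, mul_sub, one_mul, mul_one, smul_mul_assoc, mul_smul_comm,
    smul_smul, neg_smul, smul_sub, smul_add, neg_mul, mul_neg]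
  match_scalars <;> simp [Complex.I_sq] <;> ring

/-- Let `A`, `B` be unital C*-algebras with `B` having a unique tracial state `τ`.
Model the minimal tensor product `A ⊗ B` by a C*-algebra `C` with commuting unital
*-homomorphisms `f : A → C`, `g : B → C` (with `f a * g b` playing the role of
`a ⊗ b`).  Then for every tracial state `ρ` on `C` and every positive `a ∈ A`, the
functional `b ↦ ρ(a ⊗ b)` equals `ρ(a ⊗ 1) · τ`; consequently
`ρ(a' ⊗ b) = σ(a') τ(b)` for all `a' ∈ A`, `b ∈ B`, where `σ(a') = ρ(a' ⊗ 1)`. -/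
theorem trace_on_tensor_product {A B C : Type*}
    [CStarAlgebra A] [CStarAlgebra B] [CStarAlgebra C]
    (f : A →⋆ₐ[ℂ] C) (g : B →⋆ₐ[ℂ] C)
    (hcomm : ∀ (a : A) (b : B), f a * g b = g b * f a)
    (τ : B →ₗ[ℂ] ℂ) (hτ : IsTracialState τ)
    (huniq : ∀ τ' : B →ₗ[ℂ] ℂ, IsTracialState τ' → τ' = τ)
    (ρ : C →ₗ[ℂ] ℂ) (hρ : IsTracialState ρ)
    (a : A) (ha : ∃ c : A, a = star c * c) :
    (∀ b : B, ρ (f a * g b) = ρ (f a) * τ b) ∧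
      ∀ (a' : A) (b : B), ρ (f a' * g b) = ρ (f a') * τ b := by
  obtain ⟨c0, hc0⟩ := ha
  have key : ∀ (c : A) (b : B), ρ (f (star c * c) * g b) = ρ (f (star c * c)) * τ b :=
    fun c b => key_lemma f g hcomm τ huniq ρ hρ c b
  have main : ∀ (a' : A) (b : B), ρ (f a' * g b) = ρ (f a') * τ b := by
    intro a' b
    -- the defect functional, linear in a'
    set F : A →ₗ[ℂ] ℂ :=
      { toFun := fun x => ρ (f x * g b) - ρ (f x) * τ b
        map_add' := by intro x y; simp [map_add, add_mul]; ring
        map_smul' := by intro s x; simp [map_smul, smul_mul_assoc]; ring } with hF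
    have hFsq : ∀ c : A, F (star c * c) = 0 := by
      intro c
      simp only [hF, LinearMap.coe_mk, AddHom.coe_mk]
      rw [key c b, sub_self]
    have h4 : F ((4 : ℂ) • a') = 0 := by
      rw [polarize a', map_add, map_sub, map_sub, map_smul, map_smul]
      rw [hFsq (1 + a'), hFsq (1 + Complex.I • a'), hFsq (1 - a'), hFsq (1 - Complex.I • a')]
      simp
    rw [map_smul] at h4
    have hF0 : F a' = 0 := by
      have h4' : (4 : ℂ) * F a' = 0 := h4
      have := mul_eq_zero.mp h4'
      simpa using this
    simp only [hF, LinearMap.coe_mk, AddHom.coe_mk] at hF0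
    exact sub_eq_zero.mp hF0
  exact ⟨fun b => main a b, main⟩
end
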